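/- arXiv:1511.02202 — 6 statements merged into one kernel-verified Lean document; each statement's English description precedes it below -/
import Mathlib

section
/- Let (σₙ) be a sequence of nonnegative superadditive functions on the power set of ℕ such that for each n, σₙ(A ∪ B) = σₙ(A) + σₙ(B) whenever A and B are disjoint and one of them is finite. Let N ⊆ ℕ be infinite and ε > 0 be such that σₙ(F) < ε/2 for every finite F ⊆ N and every n. Then there exists an infinite set U ⊆ N such that σₙ(U) < ε for all n. -/
/-- Lemma 4 (Kalenda-type): given nonnegative superadditive set functions on 𝒫(ℕ)
which are additive when one of the pieces is finite, and an infinite set N on whose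
finite subsets all σₙ are < ε/2, there is an infinite U ⊆ N with σₙ(U) < ε for all n. -/
theorem stmt3 (σ : ℕ → Set ℕ → ℝ)
    (h_nonneg : ∀ n A, 0 ≤ σ n A)
    (h_super : ∀ n (A B : Set ℕ), Disjoint A B → σ n A + σ n B ≤ σ n (A ∪ B))
    (h_add : ∀ n (A B : Set ℕ), Disjoint A B → (A.Finite ∨ B.Finite) →
      σ n (A ∪ B) = σ n A + σ n B)
    (N : Set ℕ) (hN : N.Infinite) (ε : ℝ) (hε : 0 < ε)
    (h_small : ∀ n, ∀ F ⊆ N, F.Finite → σ n F < ε / 2) :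
    ∃ U ⊆ N, U.Infinite ∧ ∀ n, σ n U < ε := by
  -- monotonicity
  have mono : ∀ n (A B : Set ℕ), A ⊆ B → σ n A ≤ σ n B := by
    intro n A B hAB
    have hd : Disjoint A (B \ A) := Set.disjoint_sdiff_right
    have h1 := h_super n A (B \ A) hd
    rw [Set.union_diff_cancel hAB] at h1
    have := h_nonneg n (B \ A)
    linarith
  -- split an infinite set into two disjoint infinite subsets
  have split : ∀ M : Set ℕ, M.Infinite →
      ∃ A B : Set ℕ, A ⊆ M ∧ B ⊆ M ∧ Disjoint A B ∧ A.Infinite ∧ B.Infinite := by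
    intro M hM
    let f := hM.natEmbedding
    refine ⟨Set.range (fun k => (f (2*k) : ℕ)), Set.range (fun k => (f (2*k+1) : ℕ)),
      ?_, ?_, ?_, ?_, ?_⟩
    · rintro x ⟨k, rfl⟩; exact (f (2*k)).2
    · rintro x ⟨k, rfl⟩; exact (f (2*k+1)).2
    · rw [Set.disjoint_left]
      rintro x ⟨k, rfl⟩ ⟨j, hj⟩
      have : f (2*j+1) = f (2*k) := Subtype.val_injective hj
      have := f.injective this
      omega
    · exact Set.infinite_range_of_injective
        (fun a b h => by have := f.injective (Subtype.val_injective h); omega)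
    · exact Set.infinite_range_of_injective
        (fun a b h => by have := f.injective (Subtype.val_injective h); omega)
  -- key: inside any infinite set there is an infinite subset with small σ n
  have key : ∀ (n : ℕ) (M : Set ℕ), M.Infinite →
      ∃ M', M' ⊆ M ∧ M'.Infinite ∧ σ n M' < ε / 2 := by
    intro n
    have main : ∀ (j : ℕ) (M : Set ℕ), M.Infinite → σ n M < (ε/2) * 2 ^ j →
        ∃ M', M' ⊆ M ∧ M'.Infinite ∧ σ n M' < ε / 2 := by
      intro j
      induction j with
      | zero => intro M hM h; exact ⟨M, subset_rfl, hM, by simpa using h⟩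
      | succ j ih =>
        intro M hM h
        obtain ⟨A, B, hA, hB, hd, hAi, hBi⟩ := split M hM
        have hsum : σ n A + σ n B ≤ σ n M :=
          le_trans (h_super n A B hd) (mono n (A ∪ B) M (Set.union_subset hA hB))
        have hp : (2:ℝ) ^ (j+1) = 2 * 2 ^ j := by ring
        by_cases hc : σ n A < (ε/2) * 2 ^ j
        · obtain ⟨M', h1, h2, h3⟩ := ih A hAi hc
          exact ⟨M', h1.trans hA, h2, h3⟩
        · push_neg at hc
          have hB' : σ n B < (ε/2) * 2 ^ j := by
            rw [hp] at h; linarith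
          obtain ⟨M', h1, h2, h3⟩ := ih B hBi hB'
          exact ⟨M', h1.trans hB, h2, h3⟩
    intro M hM
    obtain ⟨j, hj⟩ := pow_unbounded_of_one_lt (σ n M / (ε/2)) (one_lt_two (α := ℝ))
    refine main j M hM ?_
    have hε2 : (0:ℝ) < ε/2 := by linarith
    rw [div_lt_iff₀ hε2] at hj
    linarith [hj]
  choose f hf1 hf2 hf3 using key
  -- decreasing sequence of infinite sets
  let M : ℕ → {S : Set ℕ // S.Infinite} := fun n =>
    Nat.rec ⟨f 0 N hN, hf2 0 N hN⟩ (fun k ih => ⟨f (k+1) ih.1 ih.2, hf2 (k+1) ih.1 ih.2⟩) n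
  have hMsucc : ∀ k, (M (k+1)).1 ⊆ (M k).1 := fun k => hf1 (k+1) (M k).1 (M k).2
  have hMlt : ∀ k, σ k (M k).1 < ε / 2 := by
    intro k
    cases k with
    | zero => exact hf3 0 N hN
    | succ k => exact hf3 (k+1) (M k).1 (M k).2
  have hManti : ∀ {a b : ℕ}, a ≤ b → (M b).1 ⊆ (M a).1 := by
    intro a b hab
    induction hab with
    | refl => exact subset_rfl
    | @step m h ih => exact (hMsucc m).trans ih
  have hMsubN : ∀ k, (M k).1 ⊆ N := by
    intro k
    induction k with
    | zero => exact hf1 0 N hN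
    | succ k ih => exact (hMsucc k).trans ih
  -- diagonal sequence
  have exgt : ∀ (n b : ℕ), ∃ x, x ∈ (M n).1 ∧ b < x := by
    intro n b
    obtain ⟨x, hx1, hx2⟩ := (M n).2.exists_gt b
    exact ⟨x, hx1, hx2⟩
  choose g hg1 hg2 using exgt
  let u : ℕ → ℕ := fun n => Nat.rec (g 0 0) (fun k ih => g (k+1) ih) n
  have hu_mem : ∀ n, u n ∈ (M n).1 := by
    intro n
    cases n with
    | zero => exact hg1 0 0
    | succ k => exact hg1 (k+1) (u k)
  have hu_mono : StrictMono u :=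
    strictMono_nat_of_lt_succ (fun n => hg2 (n+1) (u n))
  refine ⟨Set.range u, ?_, Set.infinite_range_of_injective hu_mono.injective, ?_⟩
  · rintro x ⟨m, rfl⟩; exact hMsubN m (hu_mem m)
  · intro n
    set U := Set.range u with hU
    set F := U \ (M n).1 with hF
    have hFfin : F.Finite := by
      refine Set.Finite.subset ((Set.finite_Iio n).image u) ?_
      rintro x ⟨⟨m, rfl⟩, hx⟩
      refine ⟨m, ?_, rfl⟩
      rw [Set.mem_Iio]
      by_contra hmn
      exact hx (hManti (by omega : n ≤ m) (hu_mem m))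
    have hdisj : Disjoint F (U ∩ (M n).1) := by
      rw [Set.disjoint_left]
      rintro x ⟨_, hx2⟩ ⟨_, hx4⟩
      exact hx2 hx4
    have hunion : F ∪ (U ∩ (M n).1) = U := Set.diff_union_inter U (M n).1
    have hadd := h_add n F (U ∩ (M n).1) hdisj (Or.inl hFfin)
    rw [hunion] at hadd
    have h1 : σ n F < ε / 2 := by
      refine h_small n F (fun x hx => ?_) hFfin
      obtain ⟨⟨m, rfl⟩, _⟩ := hx
      exact hMsubN m (hu_mem m)
    have h2 : σ n (U ∩ (M n).1) ≤ σ n (M n).1 :=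
      mono n _ _ Set.inter_subset_right
    have h3 := hMlt n
    linarith
end

section
/- Let (λₙ) be a sequence of nonnegative finitely additive set functions on 𝒫(ℕ) such that λₙ(ℕ) ≤ 1 for every n and limₙ λₙ({k : k ≥ n}) = 0. Then for each ε > 0 there exists a strictly increasing sequence of positive integers p₀ < p₁ < p₂ < … such that for every infinite set U ⊆ ℕ, liminf_{n→∞} λₙ(⋃_{j ∈ ℕ∖U} {k : p_{j-1} ≤ k < p_j}) ≤ ε. -/
open Filter Set Function

/-!
Since every λₙ has total mass at most 1, there is a start `q` such that for each `m` the block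
`[q, m)` has λₙ-mass at most ε/2 for infinitely many `n`: otherwise one could chain `K > 2/ε`
consecutive intervals, each eventually of mass `> ε/2`, and their union would eventually have
mass `> 1`. Now choose `p₀ = max q 1` and recursively `p_{j+1} = n` for such an `n` with
`[q, p_j)` small and `λₙ({k ≥ n}) ≤ ε/2`. For `j ∈ U` the blocks indexed by `Uᶜ` lie in
`[q, p_j) ∪ {k ≥ p_{j+1}}`, whose `λ_{p_{j+1}}`-mass is at most `ε`; as `U` is infinite this
happens for infinitely many indices `p_{j+1}`.
-/

structure IsNonnegAdditive {α : Type*} (μ : Set α → ℝ) : Prop where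
  nonneg : ∀ A, 0 ≤ μ A
  union_eq : ∀ A B, Disjoint A B → μ (A ∪ B) = μ A + μ B

namespace IsNonnegAdditive

variable {α : Type*} {μ : Set α → ℝ}

theorem empty (hμ : IsNonnegAdditive μ) : μ ∅ = 0 := by
  have h := hμ.union_eq ∅ ∅ (disjoint_empty _)
  rw [union_empty] at h
  linarith

theorem mono (hμ : IsNonnegAdditive μ) {A B : Set α} (h : A ⊆ B) : μ A ≤ μ B := by
  rw [← union_sdiff_cancel h, hμ.union_eq _ _ disjoint_sdiff_right]
  linarith [hμ.nonneg (B \ A)]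

theorem union_le (hμ : IsNonnegAdditive μ) (A B : Set α) : μ (A ∪ B) ≤ μ A + μ B := by
  rw [← union_sdiff_self, hμ.union_eq _ _ disjoint_sdiff_right]
  linarith [hμ.mono (sdiff_subset : B \ A ⊆ B)]

theorem Ico_eq_add [LinearOrder α] (hμ : IsNonnegAdditive μ) {a b c : α} (hab : a ≤ b)
    (hbc : b ≤ c) : μ (Ico a c) = μ (Ico a b) + μ (Ico b c) := by
  rw [← Ico_union_Ico_eq_Ico hab hbc, hμ.union_eq _ _ Ico_disjoint_Ico_same]

end IsNonnegAdditive

section Blocks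

variable {α ι : Type*} [LinearOrder α] {l : Filter ι} {μ : ι → Set α → ℝ}

theorem eventually_mul_le_Ico_iterate (hμ : ∀ i, IsNonnegAdditive (μ i)) {g : α → α}
    (hg : ∀ a, a ≤ g a) {δ : ℝ} (h : ∀ a, ∀ᶠ i in l, δ ≤ μ i (Ico a (g a))) (K : ℕ) (a : α) :
    ∀ᶠ i in l, K * δ ≤ μ i (Ico a (g^[K] a)) := by
  induction K generalizing a with
  | zero => exact Eventually.of_forall fun i => by simp [(hμ i).empty]
  | succ K ih =>
    filter_upwards [h a, ih (g a)] with i h_first h_rest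
    have h_le : g a ≤ g^[K] (g a) := id_le_iterate_of_id_le hg K (g a)
    rw [iterate_succ_apply, (hμ i).Ico_eq_add (hg a) h_le]
    push_cast
    linarith

theorem exists_forall_frequently_Ico_le [Nonempty α] [l.NeBot]
    (hμ : ∀ i, IsNonnegAdditive (μ i)) {C : ℝ} (hC : ∀ i, μ i univ ≤ C) {δ : ℝ} (hδ : 0 < δ) :
    ∃ q, ∀ m, ∃ᶠ i in l, μ i (Ico q m) ≤ δ := by
  by_contra! h
  choose g hg using h
  have hg_ge : ∀ a, a ≤ g a := fun a => by
    by_contra! hlt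
    obtain ⟨i, hi⟩ := (hg a).exists
    rw [Ico_eq_empty (lt_asymm hlt), (hμ i).empty] at hi
    linarith
  obtain ⟨K, hK⟩ := exists_nat_gt (C / δ)
  obtain ⟨a⟩ := ‹Nonempty α›
  obtain ⟨i, hi⟩ := (eventually_mul_le_Ico_iterate hμ hg_ge
    (fun a => (hg a).mono fun _ => le_of_lt) K a).exists
  have hKδ : C < K * δ := (div_lt_iff₀ hδ).1 hK
  linarith [(hμ i).mono (subset_univ (Ico a (g^[K] a))), hC i]

theorem biUnion_Ico_subset_of_notMem {p : ℕ → α} (hp : Monotone p) {U : Set ℕ} {j : ℕ}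
    (hj : j ∉ U) : ⋃ i ∈ U, Ico (p i) (p (i + 1)) ⊆ Ico (p 0) (p j) ∪ Ici (p (j + 1)) := by
  intro x hx
  obtain ⟨i, hiU, hxi⟩ := mem_iUnion₂.1 hx
  rcases lt_trichotomy i j with hij | rfl | hij
  · exact Or.inl ⟨(hp (Nat.zero_le i)).trans hxi.1, hxi.2.trans_le (hp hij)⟩
  · exact absurd hiU hj
  · exact Or.inr ((hp hij).trans hxi.1)

end Blocks

theorem exists_strictMono_chain_of_frequently {P : ℕ → ℕ → Prop}
    (h : ∀ m, ∃ᶠ n in atTop, P m n) (a : ℕ) :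
    ∃ p : ℕ → ℕ, StrictMono p ∧ p 0 = a ∧ ∀ j, P (p j) (p (j + 1)) := by
  have h_next : ∀ m, ∃ n, m < n ∧ P m n := fun m =>
    ((h m).and_eventually (eventually_gt_atTop m)).exists.imp fun _ hn => ⟨hn.2, hn.1⟩
  choose f hf_gt hf using h_next
  refine ⟨fun j => f^[j] a, strictMono_nat_of_lt_succ fun j => ?_, rfl, fun j => ?_⟩
  · rw [iterate_succ_apply']
    exact hf_gt _
  · simp only [iterate_succ_apply']
    exact hf _

/-- Lemma 5 (Kalenda-type): for nonnegative finitely additive set functions λₙ on 𝒫(ℕ)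
with λₙ(ℕ) ≤ 1 and λₙ({k : k ≥ n}) → 0, for each ε > 0 there is a strictly increasing
sequence (pⱼ) of positive integers such that for every infinite U ⊆ ℕ the liminf of
λₙ of the union of blocks [pⱼ, p_{j+1}) with j ∉ U is at most ε. -/
theorem stmt4 (lam : ℕ → Set ℕ → ℝ)
    (h_nonneg : ∀ n A, 0 ≤ lam n A)
    (h_add : ∀ n (A B : Set ℕ), Disjoint A B → lam n (A ∪ B) = lam n A + lam n B)
    (h_bound : ∀ n, lam n Set.univ ≤ 1)
    (h_lim : Tendsto (fun n => lam n {k | n ≤ k}) atTop (nhds 0))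
    (ε : ℝ) (hε : 0 < ε) :
    ∃ p : ℕ → ℕ, StrictMono p ∧ 0 < p 0 ∧
      ∀ U : Set ℕ, U.Infinite →
        liminf (fun n => lam n (⋃ j ∈ Uᶜ, Set.Ico (p j) (p (j + 1)))) atTop ≤ ε := by
  have hμ : ∀ n, IsNonnegAdditive (lam n) := fun n => ⟨h_nonneg n, h_add n⟩
  obtain ⟨q, hq⟩ := exists_forall_frequently_Ico_le (l := atTop) hμ h_bound (half_pos hε)
  have h_tail : ∀ᶠ n in atTop, lam n (Ici n) ≤ ε / 2 :=
    h_lim.eventually (ge_mem_nhds (half_pos hε))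
  obtain ⟨p, hp, hp0, hp_succ⟩ :=
    exists_strictMono_chain_of_frequently (fun m => (hq m).and_eventually h_tail) (max q 1)
  refine ⟨p, hp, by omega, fun U hU => ?_⟩
  refine liminf_le_of_frequently_le ?_ (isBoundedUnder_of ⟨0, fun n => h_nonneg n _⟩)
  refine (hp.tendsto_atTop.comp (tendsto_add_atTop_nat 1)).frequently
    ((Nat.frequently_atTop_iff_infinite.2 hU).mono fun j hj => ?_)
  obtain ⟨h_head, h_tail⟩ := hp_succ j
  have h_cover : ⋃ i ∈ Uᶜ, Ico (p i) (p (i + 1)) ⊆ Ico q (p j) ∪ Ici (p (j + 1)) :=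
    (biUnion_Ico_subset_of_notMem hp.monotone (not_not_intro hj)).trans
      (union_subset_union_left _ (Ico_subset_Ico_left (hp0 ▸ le_max_left q 1)))
  calc lam (p (j + 1)) (⋃ i ∈ Uᶜ, Ico (p i) (p (i + 1)))
      ≤ lam (p (j + 1)) (Ico q (p j) ∪ Ici (p (j + 1))) := (hμ _).mono h_cover
    _ ≤ lam (p (j + 1)) (Ico q (p j)) + lam (p (j + 1)) (Ici (p (j + 1))) := (hμ _).union_le _ _
    _ ≤ ε := by linarith
end

section
/- Let X be a complex Banach space and (xₙ*) a bounded sequence in X*. Define δ_w(xₙ*) = sup{ diam clust(x**(xₙ*)) : x** ∈ B_{X**} }, where clust denotes the set of cluster points of a sequence of scalars. Let φ(x*)(x) = Re(x*(x)) be the canonical real-linear isometry X* → (X_R)*. Then δ_w(xₙ*) = δ_w(φ(xₙ*)), i.e., sup over x** ∈ B_{X**} of diam clust(x**(xₙ*)) in ℂ equals sup over real functionals y** ∈ B_{(X_R)**} of diam clust(y**(φ(xₙ*))) in ℝ. -/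
/-!
Real functionals on `X_ℝ*` and complex functionals on `X*` correspond isometrically: a complex
`F` gives `Re ∘ F`, a real `G` extends to `v ↦ G v - i G (i v)`, and `Re` of the extension is `G`.
Since `Re` is `1`-Lipschitz and, by compactness of bounded sets of scalars, every cluster point of
`Re F(xₙ)` is the real part of a cluster point of `F(xₙ)`, each real diameter is bounded by a
complex one. Conversely, for two cluster points `z₁, z₂` of `F(xₙ)` pick `|u| = 1` with
`u (z₁ - z₂) = |z₁ - z₂|`; then `Re (u F)` is a real functional of norm `≤ 1` whose cluster set
contains `Re (u z₁)` and `Re (u z₂)`, which are `|z₁ - z₂|` apart.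
-/

open Filter Metric NormedSpace Topology

section ClusterPoints

variable {ι : Type*} {l : Filter ι}

theorem MapClusterPt.exists_mapClusterPt_of_comp_of_isCompact {X Y : Type*} [TopologicalSpace X]
    [TopologicalSpace Y] [T2Space Y] {K : Set X} (hK : IsCompact K) {g : X → Y}
    (hg : Continuous g) {b : ι → X} (hbK : ∀ᶠ i in l, b i ∈ K) {t : Y}
    (ht : MapClusterPt t l (g ∘ b)) : ∃ z, MapClusterPt z l b ∧ g z = t := by
  have : NeBot (map b l ⊓ comap g (𝓝 t)) := by
    rw [neBot_inf_comap_iff_map, map_map, inf_comm]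
    exact ht
  obtain ⟨z, -, hz⟩ := hK.exists_clusterPt (f := map b l ⊓ comap g (𝓝 t))
    (inf_le_left.trans (le_principal_iff.2 hbK))
  refine ⟨z, hz.mono inf_le_left, eq_of_nhds_neBot ?_⟩
  exact (hz.mono inf_le_right).map hg.continuousAt tendsto_comap

theorem setOf_mapClusterPt_subset_closedBall {E : Type*} [SeminormedAddCommGroup E] {b : ι → E}
    {C : ℝ} (hb : ∀ i, ‖b i‖ ≤ C) : {z | MapClusterPt z l b} ⊆ closedBall 0 C := fun _ hz ↦
  isClosed_closedBall.mem_of_mapClusterPt hz (.of_forall fun i ↦ by simpa using hb i)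

theorem diam_setOf_mapClusterPt_le {E : Type*} [SeminormedAddCommGroup E] {b : ι → E}
    {C : ℝ} (hb : ∀ i, ‖b i‖ ≤ C) (hC : 0 ≤ C) : diam {z | MapClusterPt z l b} ≤ 2 * C :=
  (diam_mono (setOf_mapClusterPt_subset_closedBall hb) isBounded_closedBall).trans
    (diam_closedBall hC)

theorem diam_setOf_mapClusterPt_re_le {b : ι → ℂ} {C : ℝ} (hb : ∀ i, ‖b i‖ ≤ C) :
    diam {t | MapClusterPt t l (fun i ↦ (b i).re)} ≤ diam {z | MapClusterPt z l b} := by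
  refine diam_le_of_forall_dist_le diam_nonneg fun t₁ ht₁ t₂ ht₂ ↦ ?_
  have hK : ∀ᶠ i in l, b i ∈ closedBall 0 C := .of_forall fun i ↦ by simpa using hb i
  obtain ⟨z₁, hz₁, rfl⟩ := MapClusterPt.exists_mapClusterPt_of_comp_of_isCompact
    (isCompact_closedBall 0 C) Complex.continuous_re hK ht₁
  obtain ⟨z₂, hz₂, rfl⟩ := MapClusterPt.exists_mapClusterPt_of_comp_of_isCompact
    (isCompact_closedBall 0 C) Complex.continuous_re hK ht₂
  calc dist z₁.re z₂.re ≤ dist z₁ z₂ := by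
        rw [Real.dist_eq, Complex.dist_eq, ← Complex.sub_re]
        exact Complex.abs_re_le_norm _
    _ ≤ _ := dist_le_diam_of_mem
        (isBounded_closedBall.subset (setOf_mapClusterPt_subset_closedBall hb)) hz₁ hz₂

theorem exists_dist_le_diam_setOf_mapClusterPt_re_mul {b : ι → ℂ} {C : ℝ}
    (hb : ∀ i, ‖b i‖ ≤ C) {z₁ z₂ : ℂ} (hz₁ : MapClusterPt z₁ l b) (hz₂ : MapClusterPt z₂ l b) :
    ∃ u : ℂ, ‖u‖ = 1 ∧ dist z₁ z₂ ≤ diam {t | MapClusterPt t l (fun i ↦ (u * b i).re)} := by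
  obtain ⟨u, hu, hu_mul⟩ := Complex.exists_norm_eq_mul_self (z₁ - z₂)
  have hcont : Continuous fun z : ℂ ↦ (u * z).re := by fun_prop
  have hbdd : ∀ i, ‖(u * b i).re‖ ≤ C := fun i ↦
    (Complex.abs_re_le_norm _).trans (by simpa [hu] using hb i)
  refine ⟨u, hu, ?_⟩
  calc dist z₁ z₂ = dist (u * z₁).re (u * z₂).re := by
        rw [Complex.dist_eq, Real.dist_eq, ← Complex.sub_re, ← mul_sub, ← hu_mul]
        simp
    _ ≤ _ := dist_le_diam_of_mem
        (isBounded_closedBall.subset (setOf_mapClusterPt_subset_closedBall hbdd))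
        (hz₁.continuousAt_comp (f := fun z ↦ (u * z).re) hcont.continuousAt)
        (hz₂.continuousAt_comp (f := fun z ↦ (u * z).re) hcont.continuousAt)

theorem bddAbove_diam_setOf_mapClusterPt_strongDual {𝕜 E : Type*} [RCLike 𝕜]
    [NormedAddCommGroup E] [NormedSpace 𝕜 E] {x : ι → E} {C : ℝ} (hx : ∀ i, ‖x i‖ ≤ C)
    (hC : 0 ≤ C) :
    BddAbove {d | ∃ F : StrongDual 𝕜 E, ‖F‖ ≤ 1 ∧
      d = diam {z | MapClusterPt z l (fun i ↦ F (x i))}} := by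
  refine ⟨2 * C, ?_⟩
  rintro _ ⟨F, hF, rfl⟩
  exact diam_setOf_mapClusterPt_le (fun i ↦ by simpa using F.le_of_opNorm_le_of_le hF (hx i)) hC

end ClusterPoints

section RealDual

variable {𝕜 V W : Type*} [RCLike 𝕜] [NormedAddCommGroup V] [NormedSpace 𝕜 V] [NormedSpace ℝ V]
  [IsScalarTower ℝ 𝕜 V] [NormedAddCommGroup W] [NormedSpace ℝ W]

theorem exists_realDual_apply_eq_re (e : V ≃ₗᵢ[ℝ] W) (F : StrongDual 𝕜 V) :
    ∃ G : StrongDual ℝ W, ‖G‖ = ‖F‖ ∧ ∀ v, G (e v) = RCLike.re (F v) :=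
  ⟨(StrongDual.extendRCLikeₗᵢ.symm F).comp (e.symm : W →L[ℝ] V), by
    rw [ContinuousLinearMap.opNorm_comp_linearIsometryEquiv, LinearIsometryEquiv.norm_map],
    fun v ↦ congrArg (StrongDual.extendRCLikeₗᵢ.symm F) (e.symm_apply_apply v)⟩

theorem exists_strongDual_re_apply_eq (e : V ≃ₗᵢ[ℝ] W) (G : StrongDual ℝ W) :
    ∃ F : StrongDual 𝕜 V, ‖F‖ = ‖G‖ ∧ ∀ v, RCLike.re (F v) = G (e v) :=
  ⟨StrongDual.extendRCLike (G.comp (e : V →L[ℝ] W)), by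
    rw [StrongDual.norm_extendRCLike, ContinuousLinearMap.opNorm_comp_linearIsometryEquiv],
    fun v ↦ by simp⟩

end RealDual

section ComplexDual

variable {ι V W : Type*} {l : Filter ι} [NormedAddCommGroup V] [NormedSpace ℂ V]
  [NormedAddCommGroup W] [NormedSpace ℝ W] (e : V ≃ₗᵢ[ℝ] W) {x : ι → V} {C : ℝ}

theorem diam_setOf_mapClusterPt_le_sSup_realDual (hx : ∀ i, ‖x i‖ ≤ C) (hC : 0 ≤ C)
    {F : StrongDual ℂ V} (hF : ‖F‖ ≤ 1) :
    diam {z | MapClusterPt z l (fun i ↦ F (x i))} ≤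
      sSup {d | ∃ G : StrongDual ℝ W, ‖G‖ ≤ 1 ∧
        d = diam {t | MapClusterPt t l (fun i ↦ G (e (x i)))}} := by
  refine diam_le_of_forall_dist_le (Real.sSup_nonneg (by rintro _ ⟨G, -, rfl⟩; exact diam_nonneg))
    fun z₁ hz₁ z₂ hz₂ ↦ ?_
  obtain ⟨u, hu, hdist⟩ := exists_dist_le_diam_setOf_mapClusterPt_re_mul
    (fun i ↦ by simpa using F.le_of_opNorm_le_of_le hF (hx i)) hz₁ hz₂
  obtain ⟨G, hGF, hGre⟩ := exists_realDual_apply_eq_re e (u • F)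
  refine hdist.trans (le_csSup (bddAbove_diam_setOf_mapClusterPt_strongDual
    (x := fun i ↦ e (x i)) (by simpa using hx) hC) ?_)
  exact ⟨G, by simpa [hGF, norm_smul, hu] using hF, by simp [hGre]⟩

theorem diam_setOf_mapClusterPt_realDual_le_sSup (hx : ∀ i, ‖x i‖ ≤ C) (hC : 0 ≤ C)
    {G : StrongDual ℝ W} (hG : ‖G‖ ≤ 1) :
    diam {t | MapClusterPt t l (fun i ↦ G (e (x i)))} ≤
      sSup {d | ∃ F : StrongDual ℂ V, ‖F‖ ≤ 1 ∧
        d = diam {z | MapClusterPt z l (fun i ↦ F (x i))}} := by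
  obtain ⟨F, hFG, hFre⟩ := exists_strongDual_re_apply_eq (𝕜 := ℂ) e G
  have hF : ‖F‖ ≤ 1 := hFG.trans_le hG
  calc _ = diam {t | MapClusterPt t l (fun i ↦ (F (x i)).re)} := by simp [← hFre]
    _ ≤ _ := diam_setOf_mapClusterPt_re_le
        (fun i ↦ by simpa using F.le_of_opNorm_le_of_le hF (hx i))
    _ ≤ _ := le_csSup (bddAbove_diam_setOf_mapClusterPt_strongDual hx hC) ⟨F, hF, rfl⟩

end ComplexDual

theorem stmt6_general {X : Type*} [NormedAddCommGroup X] [NormedSpace ℂ X]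
    (xs : ℕ → StrongDual ℂ X) (C : ℝ) (hb : ∀ n, ‖xs n‖ ≤ C) :
    sSup {d : ℝ | ∃ F : StrongDual ℂ (StrongDual ℂ X), ‖F‖ ≤ 1 ∧
        d = diam {z : ℂ | MapClusterPt z atTop (fun n => F (xs n))}} =
    sSup {d : ℝ | ∃ G : StrongDual ℝ (StrongDual ℝ X), ‖G‖ ≤ 1 ∧
        d = diam {t : ℝ | MapClusterPt t atTop
          (fun n => G (Complex.reCLM.comp ((xs n).restrictScalars ℝ)))}} := by
  set φ := (StrongDual.extendRCLikeₗᵢ (𝕜 := ℂ) (F := X)).symm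
  have hC : 0 ≤ C := (norm_nonneg _).trans (hb 0)
  apply le_antisymm
  · refine Real.sSup_le ?_ (Real.sSup_nonneg (by rintro _ ⟨G, -, rfl⟩; exact diam_nonneg))
    rintro _ ⟨F, hF, rfl⟩
    exact diam_setOf_mapClusterPt_le_sSup_realDual φ hb hC hF
  · refine Real.sSup_le ?_ (Real.sSup_nonneg (by rintro _ ⟨F, -, rfl⟩; exact diam_nonneg))
    rintro _ ⟨G, hG, rfl⟩
    exact diam_setOf_mapClusterPt_realDual_le_sSup φ hb hC hG

/-- δ_w of a bounded sequence in the dual of a complex Banach space equals δ_w of its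
image under the canonical real-linear isometry φ(x*)(x) = Re(x*(x)). -/
theorem stmt6 {X : Type*} [NormedAddCommGroup X] [NormedSpace ℂ X] [CompleteSpace X]
    (xs : ℕ → StrongDual ℂ X) (C : ℝ) (hb : ∀ n, ‖xs n‖ ≤ C) :
    sSup {d : ℝ | ∃ F : StrongDual ℂ (StrongDual ℂ X), ‖F‖ ≤ 1 ∧
        d = diam {z : ℂ | MapClusterPt z atTop (fun n => F (xs n))}} =
    sSup {d : ℝ | ∃ G : StrongDual ℝ (StrongDual ℝ X), ‖G‖ ≤ 1 ∧
        d = diam {t : ℝ | MapClusterPt t atTop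
          (fun n => G (Complex.reCLM.comp ((xs n).restrictScalars ℝ)))}} :=
  stmt6_general xs C hb
end

section
/- Let K be a totally disconnected compact Hausdorff space and μ, ν mutually singular Radon probability measures on K. Then for every ε > 0 there exists a clopen set M ⊆ K with μ(M) < ε and ν(K ∖ M) < ε (i.e., μ and ν are ε-separated by a clopen set for every ε > 0). -/
open MeasureTheory
open scoped ENNReal

lemma clopen_between {K : Type*} [TopologicalSpace K] [CompactSpace K] [T2Space K]
    [TotallyDisconnectedSpace K] {C U : Set K} (hC : IsCompact C) (hU : IsOpen U)
    (hCU : C ⊆ U) : ∃ M : Set K, IsClopen M ∧ C ⊆ M ∧ M ⊆ U := by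
  choose V hV hxV hVU using fun x : C => compact_exists_isClopen_in_isOpen hU (hCU x.2)
  obtain ⟨t, ht⟩ := hC.elim_finite_subcover (fun x : C => V x) (fun x => (hV x).2)
    (fun x hx => Set.mem_iUnion.2 ⟨⟨x, hx⟩, hxV ⟨x, hx⟩⟩)
  exact ⟨⋃ x ∈ t, V x, isClopen_biUnion_finset (fun x _ => hV x), ht,
    Set.iUnion₂_subset fun x _ => hVU x⟩

lemma compl_le_of_lt {m : MeasurableSpace K} (κ : MeasureTheory.Measure K)
    [MeasureTheory.IsProbabilityMeasure κ] {C : Set K} (hCm : MeasurableSet C) {δ : ℝ≥0∞}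
    (h : 1 - δ < κ C) : κ Cᶜ ≤ δ := by
  have h2 := measure_add_measure_compl (μ := κ) hCm
  rw [measure_univ] at h2
  have heq : κ Cᶜ = 1 - κ C :=
    ENNReal.eq_sub_of_add_eq (measure_ne_top κ C) (by rw [add_comm]; exact h2)
  rw [heq]
  exact tsub_le_iff_right.2 (by rw [add_comm]; exact tsub_le_iff_right.1 h.le)

/-- On a totally disconnected compact Hausdorff space, mutually singular Radon probability
measures are ε-separated by a clopen set for every ε > 0. -/
theorem stmt9 {K : Type*} [TopologicalSpace K] [CompactSpace K] [T2Space K]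
    [TotallyDisconnectedSpace K]
    [MeasurableSpace K] [BorelSpace K]
    (μ ν : Measure K) [IsProbabilityMeasure μ] [IsProbabilityMeasure ν]
    [μ.InnerRegular] [ν.InnerRegular]
    (hsing : μ.MutuallySingular ν)
    (ε : ℝ≥0∞) (hε : 0 < ε) :
    ∃ M : Set K, IsClopen M ∧ μ M < ε ∧ ν Mᶜ < ε := by
  rcases eq_or_ne ε ⊤ with rfl | hεtop
  · exact ⟨∅, isClopen_empty, by simp [measure_empty],
      by simp⟩
  set δ := ε / 2 with hδdef
  have hδ0 : 0 < δ := ENNReal.half_pos hε.ne'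
  have hδε : δ < ε := ENNReal.half_lt_self hε.ne' hεtop
  obtain ⟨S, hSm, hμS, hνSc⟩ := hsing
  have hνS : ν S = 1 := by
    have := measure_add_measure_compl (μ := ν) hSm
    rw [hνSc, add_zero] at this; simpa using this
  have h1 : 1 - δ < ν S := by
    rw [hνS]; exact ENNReal.sub_lt_self ENNReal.one_ne_top one_ne_zero hδ0.ne'
  obtain ⟨C, hCS, hCcomp, hCν⟩ := (Measure.InnerRegular.innerRegular (μ := ν)) hSm (1 - δ) h1
  have hCm : MeasurableSet C := hCcomp.isClosed.measurableSet
  have hμC : μ C = 0 := measure_mono_null hCS hμS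
  have hμCc : μ Cᶜ = 1 := by
    have := measure_add_measure_compl (μ := μ) hCm
    rw [hμC, zero_add] at this; simpa using this
  have h2 : 1 - δ < μ Cᶜ := by
    rw [hμCc]; exact ENNReal.sub_lt_self ENNReal.one_ne_top one_ne_zero hδ0.ne'
  obtain ⟨C', hC'sub, hC'comp, hC'μ⟩ :=
    (Measure.InnerRegular.innerRegular (μ := μ)) hCm.compl (1 - δ) h2
  have hU : IsOpen C'ᶜ := hC'comp.isClosed.isOpen_compl
  have hCU : C ⊆ C'ᶜ := fun x hx hx' => hC'sub hx' hx
  obtain ⟨M, hM, hCM, hMU⟩ := clopen_between hCcomp hU hCU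
  refine ⟨M, hM, ?_, ?_⟩
  · calc μ M ≤ μ C'ᶜ := measure_mono hMU
      _ ≤ δ := compl_le_of_lt μ hC'comp.isClosed.measurableSet hC'μ
      _ < ε := hδε
  · calc ν Mᶜ ≤ ν Cᶜ := measure_mono (Set.compl_subset_compl.2 hCM)
      _ ≤ δ := compl_le_of_lt ν hCm hCν
      _ < ε := hδε
end

section
/- Let S be a totally disconnected compact Hausdorff space whose algebra of clopen sets 𝒰(S) has the subsequential completeness property: for any sequence (Uₙ) of pairwise disjoint clopen sets there is an infinite M ⊆ ℕ such that the closure of ⋃_{m∈M} Uₘ is open. Let (μₙ) be a sequence of nonnegative finitely additive functions on 𝒰(S), and (νₙ) a sequence of nonnegative monotone additive functions on the topology τ(S) with νₙ(S)=1 for all n, such that for each n and ε>0 there exists a clopen A with μₘ(A) < ε for all m and νₙ(S∖A) < ε. Then there exists an infinite set Λ ⊆ ℕ such that for each ε > 0 there is a clopen set Q with μₘ(Q) < ε for all m ∈ ℕ and νₙ(S∖Q) < ε for all n ∈ Λ. -/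
/-!
If the conclusion failed for some infinite `N ⊆ ℕ` and `ε > 0`, every clopen set `C` with all
`μ m C < ε` would leave `ν n Cᶜ ≥ ε` for almost all `n ∈ N`. Enlarging `C` step by step with the sets
given by the hypothesis then produces disjoint clopen "humps" `Hᵢ` outside a given clopen `U`, of
summably small content, with `ν_{qᵢ} Hᵢ` almost `ε` for distinct `qᵢ`. Applying the
subsequential completeness property along continuum many almost disjoint subsequences of the humps
gives continuum many clopen gluings; for each `μ m` only finitely many of them have large content,
so one gluing `V` is small for all `m`, and `U ∪ V` gains almost `ε` of `ν n`-measure on an infinite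
set of `n`. Iterating contradicts `ν n univ = 1`.

So every infinite `N` has an infinite `N'` served by a single clopen set at any scale. A decreasing
sequence of such sets at scales `1 / (k + 1)` has an infinite pseudo-intersection `Λ`; the finitely
many `n ∈ Λ` outside the `k`-th set are handled by the hypothesis directly.
-/

open Set Function

def HasClopenSCP (S : Type*) [TopologicalSpace S] : Prop :=
  ∀ U : ℕ → Set S, (∀ n, IsClopen (U n)) → Pairwise (Disjoint on U) →
    ∃ M : Set ℕ, M.Infinite ∧ IsOpen (closure (⋃ m ∈ M, U m))

section

variable {S : Type*} [TopologicalSpace S]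

structure IsClopenContent (μ : Set S → ℝ) : Prop where
  nonneg : ∀ A, IsClopen A → 0 ≤ μ A
  union : ∀ A B, IsClopen A → IsClopen B → Disjoint A B → μ (A ∪ B) = μ A + μ B

structure IsMonotoneOpenContent (ν : Set S → ℝ) : Prop where
  mono : MonotoneOn ν {A | IsOpen A}
  union : ∀ A B, IsOpen A → IsOpen B → Disjoint A B → ν (A ∪ B) = ν A + ν B

namespace IsClopenContent

variable {μ : Set S → ℝ} (hμ : IsClopenContent μ)
include hμ

lemma empty : μ ∅ = 0 := by
  simpa using hμ.union ∅ ∅ isClopen_empty isClopen_empty (disjoint_empty _)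

lemma mono {A B : Set S} (hA : IsClopen A) (hB : IsClopen B) (h : A ⊆ B) : μ A ≤ μ B := by
  have := hμ.union A (B \ A) hA (hB.diff hA) disjoint_sdiff_right
  rw [union_sdiff_cancel h] at this
  linarith [hμ.nonneg _ (hB.diff hA)]

lemma union_le {A B : Set S} (hA : IsClopen A) (hB : IsClopen B) : μ (A ∪ B) ≤ μ A + μ B := by
  have := hμ.union A (B \ A) hA (hB.diff hA) disjoint_sdiff_right
  rw [union_sdiff_self] at this
  linarith [hμ.mono (hB.diff hA) hB sdiff_subset]

lemma le_sdiff_add {A B : Set S} (hA : IsClopen A) (hB : IsClopen B) : μ A ≤ μ (A \ B) + μ B :=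
  (hμ.mono hA ((hA.diff hB).union hB) (by simp)).trans (hμ.union_le (hA.diff hB) hB)

lemma biUnion_le {ι : Type*} {H : ι → Set S} (hH : ∀ i, IsClopen (H i)) (F : Finset ι) :
    μ (⋃ i ∈ F, H i) ≤ ∑ i ∈ F, μ (H i) := by
  classical
  induction F using Finset.induction_on with
  | empty => simp [hμ.empty]
  | insert a F ha ih =>
    rw [Finset.set_biUnion_insert, Finset.sum_insert ha]
    linarith [hμ.union_le (hH a) (isClopen_biUnion_finset (s := F) fun i _ => hH i)]

lemma biUnion_eq {ι : Type*} {H : ι → Set S} (hH : ∀ i, IsClopen (H i)) (F : Finset ι)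
    (hd : (F : Set ι).PairwiseDisjoint H) : μ (⋃ i ∈ F, H i) = ∑ i ∈ F, μ (H i) := by
  classical
  induction F using Finset.induction_on with
  | empty => simp [hμ.empty]
  | insert a F ha ih =>
    rw [Finset.coe_insert, pairwiseDisjoint_insert] at hd
    rw [Finset.set_biUnion_insert, Finset.sum_insert ha, ← ih hd.1]
    refine hμ.union _ _ (hH a) (isClopen_biUnion_finset fun i _ => hH i) ?_
    exact disjoint_iUnion₂_right.2 fun i hi => hd.2 i hi (ne_of_mem_of_not_mem hi ha).symm

lemma card_mul_le {ι : Type*} {W : ι → Set S} (hW : ∀ i, IsClopen (W i)) {t : Finset ι}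
    (hd : (t : Set ι).PairwiseDisjoint W) {η : ℝ} (h : ∀ i ∈ t, η ≤ μ (W i)) :
    t.card * η ≤ μ univ :=
  calc t.card * η = ∑ i ∈ t, η := by simp
    _ ≤ ∑ i ∈ t, μ (W i) := Finset.sum_le_sum h
    _ = μ (⋃ i ∈ t, W i) := (hμ.biUnion_eq hW t hd).symm
    _ ≤ μ univ := hμ.mono (isClopen_biUnion_finset fun i _ => hW i) isClopen_univ (subset_univ _)

lemma finite_setOf_lt {ι : Type*} {V : ι → Set S} (hV : ∀ a, IsClopen (V a)) {η : ℝ} (hη : 0 < η)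
    (hK : ∀ t : Finset ι, ∃ K, IsClopen K ∧ μ K ≤ η ∧
      ∀ a ∈ t, ∀ b ∈ t, a ≠ b → V a ∩ V b ⊆ K) :
    {a | 2 * η < μ (V a)}.Finite := by
  by_contra hinf
  obtain ⟨L, hL⟩ := exists_nat_gt (μ univ / η)
  obtain ⟨t, hts, rfl⟩ := Set.Infinite.exists_subset_card_eq hinf L
  obtain ⟨K, hK, hKη, hVK⟩ := hK t
  have hd : (t : Set ι).PairwiseDisjoint fun a => V a \ K := fun a ha b hb hab =>
    disjoint_left.2 fun x hxa hxb => hxa.2 (hVK a ha b hb hab ⟨hxa.1, hxb.1⟩)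
  have hlarge : ∀ a ∈ t, η ≤ μ (V a \ K) := fun a ha => by
    linarith [hμ.le_sdiff_add (hV a) hK, show 2 * η < μ (V a) from hts ha]
  have := hμ.card_mul_le (fun a => (hV a).diff hK) hd hlarge
  rw [div_lt_iff₀ hη] at hL
  linarith

end IsClopenContent

lemma IsMonotoneOpenContent.compl_le_sdiff_add_compl {ν : Set S → ℝ} (hν : IsMonotoneOpenContent ν)
    {B C : Set S} (hB : IsClopen B) (hC : IsClopen C) : ν Cᶜ ≤ ν (B \ C) + ν Bᶜ := by
  have hBC : IsOpen (B \ C) := hB.isOpen.sdiff hC.isClosed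
  rw [← hν.union _ _ hBC hB.compl.isOpen (disjoint_compl_right.mono_left sdiff_subset)]
  refine hν.mono hC.compl.isOpen (hBC.union hB.compl.isOpen) fun x hx => ?_
  by_cases hxB : x ∈ B
  exacts [Or.inl ⟨hxB, hx⟩, Or.inr hxB]

lemma closure_biUnion_inter_closure_biUnion_subset {ι : Type*} {H : ι → Set S}
    (hH : ∀ i, IsClopen (H i)) (hd : Pairwise (Disjoint on H)) {M₁ M₂ : Set ι}
    (hfin : (M₁ ∩ M₂).Finite) (hopen : IsOpen (closure (⋃ i ∈ M₂, H i))) :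
    closure (⋃ i ∈ M₁, H i) ∩ closure (⋃ i ∈ M₂, H i) ⊆ ⋃ i ∈ M₁ ∩ M₂, H i := by
  rintro x ⟨hx₁, hx₂⟩
  by_contra hxK
  have hK : IsClosed (⋃ i ∈ M₁ ∩ M₂, H i) := hfin.isClosed_biUnion fun i _ => (hH i).isClosed
  obtain ⟨y, ⟨hy₂, hyK⟩, hy₁⟩ := mem_closure_iff.1 hx₁ _ (hopen.sdiff hK) ⟨hx₂, hxK⟩
  obtain ⟨i, hi₁, hyi⟩ := mem_iUnion₂.1 hy₁
  have hi₂ : i ∉ M₂ := fun hi₂ => hyK (mem_biUnion ⟨hi₁, hi₂⟩ hyi)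
  have hdi : Disjoint (H i) (⋃ j ∈ M₂, H j) :=
    disjoint_iUnion₂_right.2 fun j hj => hd (ne_of_mem_of_not_mem hj hi₂).symm
  exact disjoint_left.1 (hdi.closure_right (hH i).isOpen) hyi hy₂

/-- Distinct branches of the binary tree, coded by the natural numbers, share only finitely many
nodes: this gives continuum many almost disjoint infinite subsets of `ℕ`. -/
def branchCode (f : ℕ → Bool) (k : ℕ) : ℕ :=
  Encodable.encode ((List.range k).map f)

lemma branchCode_eq_branchCode {f g : ℕ → Bool} {k k' : ℕ} (h : branchCode f k = branchCode g k') :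
    k = k' ∧ ∀ i < k, f i = g i := by
  have hl := Encodable.encode_injective h
  obtain rfl : k = k' := by simpa using congrArg List.length hl
  exact ⟨rfl, fun i hi => by simpa [hi] using congrArg (·[i]?) hl⟩

lemma branchCode_injective (f : ℕ → Bool) : Injective (branchCode f) :=
  fun _ _ h => (branchCode_eq_branchCode h).1

lemma finite_range_inter_range_branchCode {f g : ℕ → Bool} (h : f ≠ g) :
    (range (branchCode f) ∩ range (branchCode g)).Finite := by
  obtain ⟨d, hd⟩ := ne_iff.1 h
  refine ((finite_Iic d).image (branchCode f)).subset ?_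
  rintro _ ⟨⟨k, rfl⟩, k', hk'⟩
  obtain ⟨-, hpre⟩ := branchCode_eq_branchCode hk'.symm
  exact ⟨k, not_lt.1 fun hdk => hd (hpre d hdk), rfl⟩

lemma uncountable_nat_to_bool : Uncountable (ℕ → Bool) :=
  Cardinal.aleph0_lt_mk_iff.mp (by simpa using Cardinal.cantor Cardinal.aleph0)

theorem HasClopenSCP.exists_isClopen_closure_biUnion (hSCP : HasClopenSCP S)
    {μ : ℕ → Set S → ℝ} (hμ : ∀ m, IsClopenContent (μ m)) {H : ℕ → Set S}
    (hH : ∀ i, IsClopen (H i)) (hd : Pairwise (Disjoint on H)) {η : ℝ} (hη : 0 < η)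
    (hsum : ∀ m (F : Finset ℕ), ∑ i ∈ F, μ m (H i) ≤ η) :
    ∃ M : Set ℕ, M.Infinite ∧ IsClopen (closure (⋃ i ∈ M, H i)) ∧
      ∀ m, μ m (closure (⋃ i ∈ M, H i)) ≤ 2 * η := by
  classical
  choose M₀ hM₀ hM₀open using fun f =>
    hSCP _ (fun k => hH (branchCode f k)) (hd.comp_of_injective (branchCode_injective f))
  set M : (ℕ → Bool) → Set ℕ := fun f => branchCode f '' M₀ f
  set V : (ℕ → Bool) → Set S := fun f => closure (⋃ i ∈ M f, H i)
  have hV : ∀ f, IsClopen (V f) := fun f =>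
    ⟨isClosed_closure, by simpa only [V, M, biUnion_image] using hM₀open f⟩
  have hMfin : ∀ f g, f ≠ g → (M f ∩ M g).Finite := fun f g h =>
    (finite_range_inter_range_branchCode h).subset
      (inter_subset_inter (image_subset_range _ _) (image_subset_range _ _))
  have hK : ∀ m (t : Finset (ℕ → Bool)), ∃ K, IsClopen K ∧ μ m K ≤ η ∧
      ∀ f ∈ t, ∀ g ∈ t, f ≠ g → V f ∩ V g ⊆ K := by
    intro m t
    have hE : (⋃ p ∈ t.offDiag, M p.1 ∩ M p.2).Finite :=
      t.offDiag.finite_toSet.biUnion fun p hp => hMfin _ _ (Finset.mem_offDiag.1 hp).2.2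
    refine ⟨⋃ i ∈ hE.toFinset, H i, isClopen_biUnion_finset fun i _ => hH i, ?_, ?_⟩
    · rw [(hμ m).biUnion_eq hH _ fun i _ j _ hij => hd hij]
      exact hsum m _
    · intro f hf g hg hfg
      refine (closure_biUnion_inter_closure_biUnion_subset hH hd (hMfin f g hfg)
        (hV g).isOpen).trans (biUnion_subset_biUnion_left fun i hi => ?_)
      rw [hE.coe_toFinset]
      exact mem_biUnion (x := (f, g)) (Finset.mem_offDiag.2 ⟨hf, hg, hfg⟩) hi
  have hcount : (⋃ m, {f | 2 * η < μ m (V f)}).Countable :=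
    countable_iUnion fun m => ((hμ m).finite_setOf_lt hV hη (hK m)).countable
  obtain ⟨f, hf⟩ : ∃ f, f ∉ ⋃ m, {f | 2 * η < μ m (V f)} := by
    by_contra! h
    exact (@not_countable_univ _ uncountable_nat_to_bool) (hcount.mono fun f _ => h f)
  exact ⟨M f, (hM₀ f).image (branchCode_injective f).injOn, hV f,
    fun m => not_lt.1 fun h => hf (mem_iUnion.2 ⟨m, h⟩)⟩

def Separates (μ ν : ℕ → Set S → ℝ) (ε : ℝ) (A : Set S) (Λ : Set ℕ) : Prop :=
  IsClopen A ∧ (∀ m, μ m A < ε) ∧ ∀ n ∈ Λ, ν n Aᶜ < ε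

namespace Separates

variable {μ ν : ℕ → Set S → ℝ} {ε ε' : ℝ} {A B : Set S} {Λ Λ' : Set ℕ}

lemma mono (h : Separates μ ν ε A Λ) (hε : ε ≤ ε') (hΛ : Λ' ⊆ Λ) : Separates μ ν ε' A Λ' :=
  ⟨h.1, fun m => (h.2.1 m).trans_le hε, fun n hn => (h.2.2 n (hΛ hn)).trans_le hε⟩

lemma union (hμ : ∀ m, IsClopenContent (μ m)) (hν : ∀ n, MonotoneOn (ν n) {A | IsOpen A})
    (hA : Separates μ ν ε A Λ) (hB : Separates μ ν ε' B Λ') :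
    Separates μ ν (ε + ε') (A ∪ B) (Λ ∪ Λ') := by
  obtain ⟨hA, hAμ, hAν⟩ := hA
  obtain ⟨hB, hBμ, hBν⟩ := hB
  have hε : 0 < ε := ((hμ 0).nonneg A hA).trans_lt (hAμ 0)
  have hε' : 0 < ε' := ((hμ 0).nonneg B hB).trans_lt (hBμ 0)
  refine ⟨hA.union hB, fun m => ((hμ m).union_le hA hB).trans_lt (add_lt_add (hAμ m) (hBμ m)), ?_⟩
  rintro n (hn | hn)
  · have := hν n (hA.union hB).compl.isOpen hA.compl.isOpen
      (compl_subset_compl.2 subset_union_left)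
    linarith [hAν n hn]
  · have := hν n (hA.union hB).compl.isOpen hB.compl.isOpen
      (compl_subset_compl.2 subset_union_right)
    linarith [hBν n hn]

end Separates

section Separation

variable {μ ν : ℕ → Set S → ℝ}

lemma exists_separates_of_finite (hμ : ∀ m, IsClopenContent (μ m))
    (hν : ∀ n, MonotoneOn (ν n) {A | IsOpen A}) (hsep : ∀ n, ∀ ε > 0, ∃ A, Separates μ ν ε A {n})
    {F : Set ℕ} (hF : F.Finite) : ∀ ε > 0, ∃ A, Separates μ ν ε A F := by
  induction F, hF using Set.Finite.induction_on with
  | empty => exact fun ε hε => ⟨∅, isClopen_empty, fun m => by simpa [(hμ m).empty], by simp⟩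
  | @insert a F _ _ ih =>
    intro ε hε
    obtain ⟨A, hA⟩ := hsep a (ε / 2) (half_pos hε)
    obtain ⟨B, hB⟩ := ih (ε / 2) (half_pos hε)
    rw [insert_eq, ← add_halves ε]
    exact ⟨A ∪ B, hA.union hμ hν hB⟩

end Separation

lemma exists_seq_eq_next_image_range {α : Type*} [DecidableEq α] (next : Finset α → α) :
    ∃ q : ℕ → α, ∀ i, q i = next ((Finset.range i).image q) := by
  let s : ℕ → Finset α := fun i => Nat.rec ∅ (fun _ s => insert (next s) s) i
  refine ⟨fun i => next (s i), fun i => congrArg next ?_⟩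
  induction i with
  | zero => rfl
  | succ i ih => rw [Finset.range_add_one, Finset.image_insert, ← ih]

lemma finset_sum_geometric_two_le (s : Finset ℕ) : ∑ i ∈ s, (1 / 2 : ℝ) ^ i ≤ 2 :=
  (summable_geometric_two.sum_le_tsum s fun i _ => by positivity).trans_eq tsum_geometric_two

section Humps

variable {μ ν : ℕ → Set S → ℝ} {ε η : ℝ} {T : Set ℕ} {U : Set S}

lemma exists_mem_gt_le_compl (hT : T.Infinite)
    (hbad : ∀ A, IsClopen A → (∀ m, μ m A < ε) → {n ∈ T | ν n Aᶜ < ε}.Finite)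
    {C : Set S} (hC : IsClopen C) (hCμ : ∀ m, μ m C < ε) (s : Finset ℕ) :
    ∃ q ∈ T, (∀ p ∈ s, p < q) ∧ ε ≤ ν q Cᶜ := by
  obtain ⟨q, ⟨hqT, hqν⟩, hqs⟩ :=
    ((hT.sdiff (hbad C hC hCμ)).sdiff (finite_Iic (s.sup id))).nonempty
  exact ⟨q, hqT, fun p hp => (Finset.le_sup (f := id) hp).trans_lt (not_le.1 hqs),
    not_lt.1 fun h => hqν ⟨hqT, h⟩⟩

lemma exists_humps (hμ : ∀ m, IsClopenContent (μ m)) (hν : ∀ n, IsMonotoneOpenContent (ν n))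
    (hsep : ∀ n, ∀ ε > 0, ∃ A, Separates μ ν ε A {n}) (hη : 0 < η) (hT : T.Infinite)
    (hbad : ∀ A, IsClopen A → (∀ m, μ m A < ε) → {n ∈ T | ν n Aᶜ < ε}.Finite)
    (hU : IsClopen U) (hUη : ∀ m, μ m U + η < ε) :
    ∃ (H : ℕ → Set S) (q : ℕ → ℕ), (∀ i, IsClopen (H i)) ∧ Pairwise (Disjoint on H) ∧
      (∀ i, Disjoint U (H i)) ∧ (∀ m (F : Finset ℕ), ∑ i ∈ F, μ m (H i) ≤ η) ∧
      Injective q ∧ (∀ i, q i ∈ T) ∧ ∀ i, ε - η < ν (q i) (H i) := by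
  classical
  -- budgets indexed by the chosen index `q`, not by the step, sum to at most `η` in any case
  set δ : ℕ → ℝ := fun q => η / 2 * (1 / 2) ^ q
  have hδ : ∀ s : Finset ℕ, ∑ q ∈ s, δ q ≤ η := fun s => by
    simp only [δ, ← Finset.mul_sum]
    nlinarith [finset_sum_geometric_two_le s]
  choose B hB using fun q => hsep q (δ q) (by positivity)
  set C : Finset ℕ → Set S := fun s => U ∪ ⋃ q ∈ s, B q
  have hBs : ∀ s : Finset ℕ, IsClopen (⋃ q ∈ s, B q) := fun s =>
    isClopen_biUnion_finset fun q _ => (hB q).1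
  have hC : ∀ s, IsClopen (C s) := fun s => hU.union (hBs s)
  have hCμ : ∀ s m, μ m (C s) < ε := fun s m => calc
    μ m (C s) ≤ μ m U + ∑ q ∈ s, μ m (B q) :=
      ((hμ m).union_le hU (hBs s)).trans (by gcongr; exact (hμ m).biUnion_le (hB · |>.1) s)
    _ ≤ μ m U + η := by
      gcongr
      exact (Finset.sum_le_sum fun q _ => ((hB q).2.1 m).le).trans (hδ s)
    _ < ε := hUη m
  choose next hnextT hnext_gt hnextν using fun s =>
    exists_mem_gt_le_compl hT hbad (hC s) (hCμ s) s
  obtain ⟨q, hq_eq⟩ := exists_seq_eq_next_image_range next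
  set s : ℕ → Finset ℕ := fun i => (Finset.range i).image q
  have hmem : ∀ {i j}, j < i → q j ∈ s i := fun hji =>
    Finset.mem_image_of_mem q (Finset.mem_range.2 hji)
  have hq : StrictMono q := fun j i hji => hq_eq i ▸ hnext_gt _ _ (hmem hji)
  refine ⟨fun i => B (q i) \ C (s i), q, fun i => (hB _).1.diff (hC _), ?_,
    fun i => ?_, fun m F => ?_, hq.injective, fun i => hq_eq i ▸ hnextT _, fun i => ?_⟩
  · refine (pairwise_disjoint_on _).2 fun j i hji => disjoint_left.2 fun x hxj hxi => ?_
    exact hxi.2 (Or.inr (mem_biUnion (hmem hji) hxj.1))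
  · exact disjoint_left.2 fun x hxU hxi => hxi.2 (Or.inl hxU)
  · calc ∑ i ∈ F, μ m (B (q i) \ C (s i)) ≤ ∑ i ∈ F, δ (q i) :=
          Finset.sum_le_sum fun i _ =>
            ((hμ m).mono ((hB _).1.diff (hC _)) (hB _).1 sdiff_subset).trans ((hB _).2.1 m).le
      _ = ∑ k ∈ F.image q, δ k := (Finset.sum_image hq.injective.injOn).symm
      _ ≤ η := hδ _
  · have hC_large : ε ≤ ν (q i) (C (s i))ᶜ := hq_eq i ▸ hnextν (s i)
    have hδq : δ (q i) ≤ η := by simpa using hδ {q i}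
    linarith [(hν (q i)).compl_le_sdiff_add_compl (hB (q i)).1 (hC (s i)), (hB (q i)).2.2 _ rfl]

end Humps

section Serving

variable {μ ν : ℕ → Set S → ℝ} {ε η : ℝ} {T N : Set ℕ} {U : Set S}

lemma exists_clopen_raising_nu (hSCP : HasClopenSCP S) (hμ : ∀ m, IsClopenContent (μ m))
    (hν : ∀ n, IsMonotoneOpenContent (ν n)) (hsep : ∀ n, ∀ ε > 0, ∃ A, Separates μ ν ε A {n})
    (hη : 0 < η) (hT : T.Infinite)
    (hbad : ∀ A, IsClopen A → (∀ m, μ m A < ε) → {n ∈ T | ν n Aᶜ < ε}.Finite)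
    (hU : IsClopen U) (hUη : ∀ m, μ m U + η < ε) :
    ∃ U', IsClopen U' ∧ (∀ m, μ m U' ≤ μ m U + 2 * η) ∧
      ∃ T' ⊆ T, T'.Infinite ∧ ∀ n ∈ T', ν n U + (ε - η) ≤ ν n U' := by
  obtain ⟨H, q, hH, hHd, hUH, hHsum, hq, hqT, hHν⟩ :=
    exists_humps hμ hν hsep hη hT hbad hU hUη
  obtain ⟨M, hM, hV, hVμ⟩ := hSCP.exists_isClopen_closure_biUnion hμ hH hHd hη hHsum
  refine ⟨U ∪ closure (⋃ i ∈ M, H i), hU.union hV,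
    fun m => ((hμ m).union_le hU hV).trans (by linarith [hVμ m]),
    q '' M, image_subset_iff.2 fun i _ => hqT i, hM.image hq.injOn, ?_⟩
  rintro _ ⟨i, hi, rfl⟩
  calc ν (q i) U + (ε - η) ≤ ν (q i) U + ν (q i) (H i) := by linarith [hHν i]
    _ = ν (q i) (U ∪ H i) := ((hν _).union _ _ hU.isOpen (hH i).isOpen (hUH i)).symm
    _ ≤ ν (q i) (U ∪ closure (⋃ i ∈ M, H i)) :=
      (hν _).mono (hU.union (hH i)).isOpen (hU.union hV).isOpen
        (union_subset_union_right _ ((subset_biUnion_of_mem hi).trans subset_closure))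

lemma exists_clopen_nu_ge_of_finite (hSCP : HasClopenSCP S) (hμ : ∀ m, IsClopenContent (μ m))
    (hν : ∀ n, IsMonotoneOpenContent (ν n)) (hsep : ∀ n, ∀ ε > 0, ∃ A, Separates μ ν ε A {n})
    (hε : 0 < ε) (hN : N.Infinite)
    (hbad : ∀ A, IsClopen A → (∀ m, μ m A < ε) → {n ∈ N | ν n Aᶜ < ε}.Finite) (r : ℕ) :
    ∃ U, IsClopen U ∧ (∀ m, μ m U ≤ ε / 2 * (1 - (1 / 2) ^ r)) ∧
      ∃ T ⊆ N, T.Infinite ∧ ∀ n ∈ T, r * (ε / 2) ≤ ν n U := by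
  induction r with
  | zero =>
    have hν_empty : ∀ n, ν n ∅ = 0 := fun n => by
      simpa using (hν n).union ∅ ∅ isOpen_empty isOpen_empty (disjoint_empty _)
    exact ⟨∅, isClopen_empty, fun m => by simp [(hμ m).empty], N, subset_rfl, hN,
      fun n _ => by simp [hν_empty]⟩
  | succ r ih =>
    obtain ⟨U, hU, hUμ, T, hTN, hT, hTν⟩ := ih
    have hc : 0 < ε * (1 / 2) ^ r := by positivity
    have hc' : ε * (1 / 2) ^ r ≤ ε :=
      mul_le_of_le_one_right hε.le (pow_le_one₀ (by norm_num) (by norm_num))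
    obtain ⟨U', hU', hU'μ, T', hT'T, hT', hT'ν⟩ := exists_clopen_raising_nu hSCP hμ hν hsep
      (η := ε * (1 / 2) ^ r / 8) (by positivity) hT
      (fun A hA hAμ => (hbad A hA hAμ).subset fun n hn => ⟨hTN hn.1, hn.2⟩) hU
      (fun m => by linarith [hUμ m])
    refine ⟨U', hU', fun m => ?_, T', hT'T.trans hTN, hT', fun n hn => ?_⟩
    · rw [pow_succ]
      linarith [hU'μ m, hUμ m]
    · push_cast
      linarith [hT'ν n hn, hTν n (hT'T hn)]

theorem exists_separates_of_infinite (hSCP : HasClopenSCP S) (hμ : ∀ m, IsClopenContent (μ m))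
    (hν : ∀ n, IsMonotoneOpenContent (ν n)) (hν_one : ∀ n, ν n univ = 1)
    (hsep : ∀ n, ∀ ε > 0, ∃ A, Separates μ ν ε A {n}) (hN : N.Infinite) (hε : 0 < ε) :
    ∃ N' ⊆ N, N'.Infinite ∧ ∃ A, Separates μ ν ε A N' := by
  by_contra hcon
  have hbad : ∀ A, IsClopen A → (∀ m, μ m A < ε) → {n ∈ N | ν n Aᶜ < ε}.Finite :=
    fun A hA hAμ => not_infinite.1 fun hinf =>
      hcon ⟨_, sep_subset _ _, hinf, A, hA, hAμ, fun _ hn => hn.2⟩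
  obtain ⟨r, hr⟩ := exists_nat_gt (2 / ε)
  obtain ⟨U, hU, -, T, -, hT, hTν⟩ := exists_clopen_nu_ge_of_finite hSCP hμ hν hsep hε hN hbad r
  obtain ⟨n, hn⟩ := hT.nonempty
  have hle : ν n U ≤ 1 := hν_one n ▸ (hν n).mono hU.isOpen isOpen_univ (subset_univ U)
  rw [div_lt_iff₀ hε] at hr
  linarith [hTν n hn]

end Serving

lemma exists_antitone_of_forall_exists_subset {Q : ℕ → Set ℕ → Prop}
    (h : ∀ k (N : Set ℕ), N.Infinite → ∃ N' ⊆ N, N'.Infinite ∧ Q k N') :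
    ∃ N : ℕ → Set ℕ, Antitone N ∧ (∀ k, (N k).Infinite) ∧ ∀ k, Q k (N k) := by
  choose! next hsub hinf hQ using h
  let N : ℕ → Set ℕ := fun k => Nat.rec univ (fun k N => next k N) k
  have hN : ∀ k, (N k).Infinite := fun k => by
    induction k with
    | zero => exact infinite_univ
    | succ k ih => exact hinf k _ ih
  exact ⟨fun k => N (k + 1), antitone_nat_of_succ_le fun k => hsub _ _ (hN (k + 1)),
    fun k => hN (k + 1), fun k => hQ k _ (hN k)⟩

lemma exists_infinite_forall_sdiff_finite {N : ℕ → Set ℕ} (hanti : Antitone N)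
    (hN : ∀ k, (N k).Infinite) : ∃ Λ : Set ℕ, Λ.Infinite ∧ ∀ k, (Λ \ N k).Finite := by
  choose n hnN hkn using fun k => ((hN k).sdiff (finite_Iio k)).nonempty
  refine ⟨range n, infinite_of_not_bddAbove ?_, fun k => ?_⟩
  · rintro ⟨b, hb⟩
    exact hkn (b + 1) (Nat.lt_succ_of_le (hb (mem_range_self _)))
  · refine ((finite_Iio k).image n).subset ?_
    rintro _ ⟨⟨j, rfl⟩, hj⟩
    exact ⟨j, not_le.1 fun hkj => hj (hanti hkj (hnN j)), rfl⟩

end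

theorem stmt10_general {S : Type*} [TopologicalSpace S]
    (hSCP : ∀ U : ℕ → Set S, (∀ n, IsClopen (U n)) →
      Pairwise (Function.onFun Disjoint U) →
      ∃ M : Set ℕ, M.Infinite ∧ IsOpen (closure (⋃ m ∈ M, U m)))
    (μ ν : ℕ → Set S → ℝ)
    (hμ_nonneg : ∀ n A, IsClopen A → 0 ≤ μ n A)
    (hμ_add : ∀ n (A B : Set S), IsClopen A → IsClopen B → Disjoint A B →
      μ n (A ∪ B) = μ n A + μ n B)
    (hν_mono : ∀ n (A B : Set S), IsOpen A → IsOpen B → A ⊆ B → ν n A ≤ ν n B)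
    (hν_add : ∀ n (A B : Set S), IsOpen A → IsOpen B → Disjoint A B →
      ν n (A ∪ B) = ν n A + ν n B)
    (hν_one : ∀ n, ν n Set.univ = 1)
    (hsep : ∀ n, ∀ ε > (0 : ℝ), ∃ A : Set S, IsClopen A ∧
      (∀ m, μ m A < ε) ∧ ν n Aᶜ < ε) :
    ∃ Λ : Set ℕ, Λ.Infinite ∧ ∀ ε > (0 : ℝ), ∃ Q : Set S, IsClopen Q ∧
      (∀ m, μ m Q < ε) ∧ ∀ n ∈ Λ, ν n Qᶜ < ε := by
  have hμ : ∀ m, IsClopenContent (μ m) := fun m => ⟨hμ_nonneg m, hμ_add m⟩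
  have hν : ∀ n, IsMonotoneOpenContent (ν n) :=
    fun n => ⟨fun A hA B hB => hν_mono n A B hA hB, hν_add n⟩
  have hsep' : ∀ n, ∀ ε > 0, ∃ A, Separates μ ν ε A {n} := fun n ε hε => by
    obtain ⟨A, hA, hAμ, hAν⟩ := hsep n ε hε
    exact ⟨A, hA, hAμ, fun _ hm => (mem_singleton_iff.1 hm) ▸ hAν⟩
  obtain ⟨N, hanti, hNinf, hA⟩ := exists_antitone_of_forall_exists_subset fun k N hN =>
    exists_separates_of_infinite hSCP hμ hν hν_one hsep' hN (Nat.one_div_pos_of_nat (n := k))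
  choose A hA using hA
  obtain ⟨Λ, hΛ, hΛN⟩ := exists_infinite_forall_sdiff_finite hanti hNinf
  refine ⟨Λ, hΛ, fun ε hε => ?_⟩
  obtain ⟨k, hk⟩ := exists_nat_one_div_lt (half_pos hε)
  obtain ⟨D, hD⟩ :=
    exists_separates_of_finite hμ (fun n => (hν n).mono) hsep' (hΛN k) _ (half_pos hε)
  exact ⟨A k ∪ D, ((hA k).union hμ (fun n => (hν n).mono) hD).mono (ε' := ε) (Λ' := Λ)
    (by linarith) (by simp)⟩

/-- Key lemma: S is a Haydon space (totally disconnected compact Hausdorff whose clopen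
algebra has the subsequential completeness property), (μₙ) nonnegative additive functions
on the clopen algebra, (νₙ) nonnegative monotone additive functions on the topology with
νₙ(S) = 1, and for each n and ε > 0 some clopen set A has μₘ(A) < ε for all m and
νₙ(S∖A) < ε.  Then there is an infinite Λ ⊆ ℕ such that for every ε > 0 a single clopen Q
works for all m ∈ ℕ and all n ∈ Λ. -/
theorem stmt10 {S : Type*} [TopologicalSpace S] [CompactSpace S] [T2Space S]
    [TotallyDisconnectedSpace S]
    (hSCP : ∀ U : ℕ → Set S, (∀ n, IsClopen (U n)) →
      Pairwise (Function.onFun Disjoint U) →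
      ∃ M : Set ℕ, M.Infinite ∧ IsOpen (closure (⋃ m ∈ M, U m)))
    (μ ν : ℕ → Set S → ℝ)
    (hμ_nonneg : ∀ n A, IsClopen A → 0 ≤ μ n A)
    (hμ_add : ∀ n (A B : Set S), IsClopen A → IsClopen B → Disjoint A B →
      μ n (A ∪ B) = μ n A + μ n B)
    (hν_nonneg : ∀ n A, IsOpen A → 0 ≤ ν n A)
    (hν_mono : ∀ n (A B : Set S), IsOpen A → IsOpen B → A ⊆ B → ν n A ≤ ν n B)
    (hν_add : ∀ n (A B : Set S), IsOpen A → IsOpen B → Disjoint A B →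
      ν n (A ∪ B) = ν n A + ν n B)
    (hν_one : ∀ n, ν n Set.univ = 1)
    (hsep : ∀ n, ∀ ε > (0 : ℝ), ∃ A : Set S, IsClopen A ∧
      (∀ m, μ m A < ε) ∧ ν n Aᶜ < ε) :
    ∃ Λ : Set ℕ, Λ.Infinite ∧ ∀ ε > (0 : ℝ), ∃ Q : Set S, IsClopen Q ∧
      (∀ m, μ m Q < ε) ∧ ∀ n ∈ Λ, ν n Qᶜ < ε :=
  stmt10_general hSCP μ ν hμ_nonneg hμ_add hν_mono hν_add hν_one hsep
end

section
/- Every σ-Stonean compact Hausdorff space (the closure of any open F_σ set is open) is a Haydon space: it is totally disconnected and its algebra of clopen sets has the subsequential completeness property. -/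
/-- Every σ-Stonean compact Hausdorff space (the closure of every open F_σ set is open)
is a Haydon space: it is totally disconnected and its clopen algebra has the
subsequential completeness property. -/
theorem stmt16 {K : Type*} [TopologicalSpace K] [CompactSpace K] [T2Space K]
    (hσ : ∀ U : Set K, IsOpen U →
      (∃ F : ℕ → Set K, (∀ n, IsClosed (F n)) ∧ U = ⋃ n, F n) →
      IsOpen (closure U)) :
    TotallyDisconnectedSpace K ∧
    ∀ U : ℕ → Set K, (∀ n, IsClopen (U n)) →
      Pairwise (Function.onFun Disjoint U) →
      ∃ M : Set ℕ, M.Infinite ∧ IsOpen (closure (⋃ m ∈ M, U m)) := by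
  constructor
  · -- totally disconnected via totally separated
    have : TotallySeparatedSpace K := by
      constructor
      intro x _ y _ hxy
      obtain ⟨f, hf0, hf1, hf01⟩ := exists_continuous_zero_one_of_isClosed
        (isClosed_singleton (x := x)) (isClosed_singleton (x := y))
        (Set.disjoint_singleton.mpr hxy)
      have hUopen : IsOpen (f ⁻¹' (Set.Iio (1/2))) := isOpen_Iio.preimage f.continuous
      have hFσ : ∃ F : ℕ → Set K, (∀ n, IsClosed (F n)) ∧
          f ⁻¹' (Set.Iio (1/2)) = ⋃ n, F n := by
        refine ⟨fun n => f ⁻¹' (Set.Iic (1/2 - 1/(n+1))), fun n =>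
          isClosed_Iic.preimage f.continuous, ?_⟩
        ext z
        simp only [Set.mem_preimage, Set.mem_Iio, Set.mem_iUnion, Set.mem_Iic]
        constructor
        · intro h
          obtain ⟨n, hn⟩ := exists_nat_one_div_lt (show (0:ℝ) < 1/2 - f z by linarith)
          exact ⟨n, by linarith⟩
        · rintro ⟨n, hn⟩
          have : (0:ℝ) < 1/(n+1) := by positivity
          linarith
      have hC : IsOpen (closure (f ⁻¹' (Set.Iio (1/2)))) := hσ _ hUopen hFσ
      have hxC : x ∈ closure (f ⁻¹' (Set.Iio (1/2))) := subset_closure (by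
        simp only [Set.mem_preimage, Set.mem_Iio, hf0 rfl]
        norm_num)
      have hyC : y ∉ closure (f ⁻¹' (Set.Iio (1/2))) := by
        have hsub : closure (f ⁻¹' (Set.Iio (1/2))) ⊆ f ⁻¹' (Set.Iic (1/2)) :=
          closure_minimal (Set.preimage_mono Set.Iio_subset_Iic_self)
            (isClosed_Iic.preimage f.continuous)
        intro hy
        have := hsub hy
        simp only [Set.mem_preimage, Set.mem_Iic, hf1 rfl] at this
        norm_num at this
      exact ⟨_, _, hC, isClosed_closure.isOpen_compl, hxC, hyC,
        by simp [Set.union_compl_self], disjoint_compl_right⟩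
    exact this.totallyDisconnectedSpace
  · intro U hU _
    refine ⟨Set.univ, Set.infinite_univ, ?_⟩
    simp only [Set.mem_univ, Set.iUnion_true]
    exact hσ _ (isOpen_iUnion fun n => (hU n).2) ⟨U, fun n => (hU n).1, rfl⟩
end
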